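/- Let E be a directed graph, K a field, v an infinite emitter of E, and S ⊆ T finite non-empty subsets of s^{-1}(v). Then in V[L_K(E)]: [p_v − Σ_{e∈S} t_e t_e^*] = [p_v − Σ_{e∈T} t_e t_e^*] + Σ_{e ∈ T\S} [p_{r(e)}]. -/
import Mathlib


open Matrix

/-- Square matrices of size `n` over `R`, the building blocks of `M_∞(R)`. -/
abbrev Mat (R : Type) [NonUnitalRing R] (n : ℕ) : Type := Matrix (Fin n) (Fin n) R

/-- The embedding `M_n(R) ⊆ M_N(R)`, `a ↦ a ⊕ 0`, realizing `M_∞(R) = ⋃ₙ M_n(R)`. -/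
def pad {R : Type} [NonUnitalRing R] {n : ℕ} (N : ℕ) (a : Mat R n) : Mat R N :=
  Matrix.of fun i j =>
    if h : (i : ℕ) < n ∧ (j : ℕ) < n then a ⟨i, h.1⟩ ⟨j, h.2⟩ else 0

/-- Block-diagonal direct sum `a ⊕ b` of square matrices. -/
def dsum {R : Type} [NonUnitalRing R] {n m : ℕ} (a : Mat R n) (b : Mat R m) :
    Mat R (n + m) :=
  Matrix.reindex finSumFinEquiv finSumFinEquiv (Matrix.fromBlocks a 0 0 b)

/-- Murray–von Neumann equivalence in `M_∞(R)`: `a ~ b` iff after embedding in a common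
`M_N(R)` there are `x, y` with `a = x*y` and `b = y*x`. -/
def MvN {R : Type} [NonUnitalRing R] {n m : ℕ} (a : Mat R n) (b : Mat R m) : Prop :=
  ∃ N, n ≤ N ∧ m ≤ N ∧ ∃ x y : Mat R N, pad N a = x * y ∧ pad N b = y * x

/-- An idempotent element of `M_∞(R)`: an idempotent `n × n` matrix for some `n`. -/
def IdemMat (R : Type) [NonUnitalRing R] : Type :=
  Σ n : ℕ, {a : Mat R n // IsIdempotentElem a}

/-- The defining relations of the monoid `V[R]` on the free commutative monoid
(`Multiset`) on the idempotent matrices: equivalent idempotents are identified,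
`[a] + [b] = [a ⊕ b]`, and `[0] = 0`. -/
inductive VRel (R : Type) [NonUnitalRing R] :
    Multiset (IdemMat R) → Multiset (IdemMat R) → Prop
  | equiv (a b : IdemMat R) : MvN a.2.1 b.2.1 → VRel R {a} {b}
  | add (a b c : IdemMat R) : c.1 = a.1 + b.1 → HEq c.2.1 (dsum a.2.1 b.2.1) →
      VRel R ({a} + {b}) {c}
  | zero (c : IdemMat R) : c.2.1 = (0 : Mat R c.1) → VRel R {c} 0

/-- The monoid `V[R]` of Murray–von Neumann equivalence classes of idempotent matrices. -/
def VMon (R : Type) [NonUnitalRing R] : Type := (addConGen (VRel R)).Quotient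

noncomputable instance (R : Type) [NonUnitalRing R] : AddCommMonoid (VMon R) := by
  unfold VMon; infer_instance

/-- The class `[a] ∈ V[R]` of an idempotent matrix. -/
def cls {R : Type} [NonUnitalRing R] (a : IdemMat R) : VMon R :=
  (addConGen (VRel R)).mk' {a}

open Classical in
/-- The class in `V[R]` of an idempotent ring element, viewed as a `1 × 1` matrix
(junk value `0` if the element is not idempotent). -/
noncomputable def clsE {R : Type} [NonUnitalRing R] (a : R) : VMon R :=
  if h : IsIdempotentElem (Matrix.of fun _ _ : Fin 1 => a) then cls ⟨1, _, h⟩ else 0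

attribute [local instance] Classical.propDecidable

/-- A directed graph: vertices, edges, and source/range maps. -/
structure DGraph where
  V : Type
  E : Type
  s : E → V
  r : E → V

namespace DGraph

/-- The set of edges emitted by a vertex. -/
def emit (G : DGraph) (v : G.V) : Set G.E := {e | G.s e = v}

/-- A regular vertex: emits a nonzero finite number of edges. -/
def Regular (G : DGraph) (v : G.V) : Prop := (G.emit v).Finite ∧ (G.emit v).Nonempty

/-- An infinite emitter: emits infinitely many edges. -/
def InfEmitter (G : DGraph) (v : G.V) : Prop := (G.emit v).Infinite

end DGraph

/-- The extra generators `a_{v,S}` of the graph monoid: `v` an infinite emitter and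
`S` a finite non-empty subset of `s⁻¹(v)`. -/
def InfGen (G : DGraph) : Type :=
  {x : G.V × Finset G.E // G.InfEmitter x.1 ∧ x.2.Nonempty ∧ ∀ e ∈ x.2, G.s e = x.1}

/-- The generators of the graph monoid `M̄_E`: one generator `a_v` per vertex, and one
generator `a_{v,S}` per infinite emitter `v` and finite non-empty `S ⊆ s⁻¹(v)`. -/
abbrev MGen (G : DGraph) : Type := G.V ⊕ InfGen G

/-- The defining relations of the graph monoid `M̄_E` on the free commutative monoid
(`Multiset`) on the generators. -/
inductive MRel (G : DGraph) : Multiset (MGen G) → Multiset (MGen G) → Prop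
  | reg (v : G.V) (h : (G.emit v).Finite) (hne : (G.emit v).Nonempty) :
      MRel G {Sum.inl v} (h.toFinset.val.map fun e => (Sum.inl (G.r e) : MGen G))
  | inf (x : InfGen G) :
      MRel G {Sum.inl x.1.1}
        ({Sum.inr x} + x.1.2.val.map fun e => (Sum.inl (G.r e) : MGen G))
  | exch (x y : InfGen G) : x.1.1 = y.1.1 →
      MRel G
        ({Sum.inr x} + ((x.1.2 \ y.1.2).val.map fun e => (Sum.inl (G.r e) : MGen G)))
        ({Sum.inr y} + ((y.1.2 \ x.1.2).val.map fun e => (Sum.inl (G.r e) : MGen G)))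

/-- The graph monoid `M̄_E` of a directed graph. -/
def Mbar (G : DGraph) : Type := (addConGen (MRel G)).Quotient

noncomputable instance (G : DGraph) : AddCommMonoid (Mbar G) := by
  unfold Mbar; infer_instance

/-- The generator `a_v` of `M̄_E`. -/
def genV (G : DGraph) (v : G.V) : Mbar G := (addConGen (MRel G)).mk' {Sum.inl v}

/-- The generator `a_{v,S}` of `M̄_E`. -/
def genS (G : DGraph) (x : InfGen G) : Mbar G := (addConGen (MRel G)).mk' {Sum.inr x}

/-- A Leavitt `E`-family in a ring `A`: idempotents `p_v` and elements `t_e, t'_e`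
satisfying the defining relations of the Leavitt path algebra. -/
structure LeavittFamily (G : DGraph) (A : Type) [NonUnitalRing A] where
  p : G.V → A
  t : G.E → A
  t' : G.E → A
  p_idem : ∀ v, p v * p v = p v
  p_orth : ∀ v w, v ≠ w → p v * p w = 0
  s_t : ∀ e, p (G.s e) * t e = t e
  t_r : ∀ e, t e * p (G.r e) = t e
  r_t' : ∀ e, p (G.r e) * t' e = t' e
  t'_s : ∀ e, t' e * p (G.s e) = t' e
  t'_t : ∀ e, t' e * t e = p (G.r e)
  t'_t_orth : ∀ e f, e ≠ f → t' e * t f = 0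
  reg : ∀ v (h : (G.emit v).Finite), (G.emit v).Nonempty →
      p v = ∑ e ∈ h.toFinset, t e * t' e

section AuxV

variable {R : Type} [NonUnitalRing R]

lemma pad_self {n : ℕ} (a : Mat R n) : pad n a = a := by
  ext i j
  simp [pad, i.isLt, j.isLt]

lemma idem_one_of (a : R) (h : a * a = a) :
    IsIdempotentElem (Matrix.of fun _ _ : Fin 1 => a) := by
  show _ * _ = _
  ext i j
  simp [Matrix.mul_apply, h]

lemma clsE_of_idem (a : R) (h : a * a = a) :
    clsE a = cls ⟨1, Matrix.of fun _ _ => a, idem_one_of a h⟩ := by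
  simp only [clsE]
  rw [dif_pos (idem_one_of a h)]

lemma cls_eq_of_MvN (a b : IdemMat R) (h : MvN a.2.1 b.2.1) : cls a = cls b :=
  (AddCon.eq (addConGen (VRel R))).mpr (AddConGen.Rel.of _ _ (VRel.equiv a b h))

lemma cls_add (a b c : IdemMat R) (h1 : c.1 = a.1 + b.1)
    (h2 : HEq c.2.1 (dsum a.2.1 b.2.1)) : cls a + cls b = cls c := by
  show (addConGen (VRel R)).mk' {a} + (addConGen (VRel R)).mk' {b} = _
  rw [← map_add]
  exact (AddCon.eq (addConGen (VRel R))).mpr (AddConGen.Rel.of _ _ (VRel.add a b c h1 h2))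

lemma clsE_zero : clsE (0 : R) = 0 := by
  rw [clsE_of_idem 0 (by simp)]
  show (addConGen (VRel R)).mk' _ = _
  rw [show (0 : VMon R) = (addConGen (VRel R)).mk' 0 from (map_zero _).symm]
  refine (AddCon.eq (addConGen (VRel R))).mpr (AddConGen.Rel.of _ _ (VRel.zero _ ?_))
  ext i j; rfl

lemma clsE_eq_of_conj (a b x y : R) (ha : a * a = a) (hb : b * b = b)
    (hxy : a = x * y) (hyx : b = y * x) : clsE a = clsE b := by
  rw [clsE_of_idem a ha, clsE_of_idem b hb]
  refine cls_eq_of_MvN _ _ ⟨1, le_refl 1, le_refl 1,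
    Matrix.of fun _ _ => x, Matrix.of fun _ _ => y, ?_, ?_⟩ <;>
  · ext i j
    simp [pad, Matrix.mul_apply, hxy, hyx]

lemma dsum_one_one (a b : R) :
    dsum (Matrix.of fun _ _ : Fin 1 => a) (Matrix.of fun _ _ : Fin 1 => b)
      = !![a, 0; 0, b] := by
  ext i j
  fin_cases i <;> fin_cases j <;>
    simp [dsum, finSumFinEquiv, Matrix.fromBlocks, Fin.addCases]

lemma clsE_add_orth (a b : R) (ha : a * a = a) (hb : b * b = b)
    (hab : a * b = 0) (hba : b * a = 0) : clsE (a + b) = clsE a + clsE b := by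
  have habs : (a + b) * (a + b) = a + b := by
    rw [add_mul, mul_add, mul_add, ha, hb, hab, hba, add_zero, zero_add]
  have hD : IsIdempotentElem
      (dsum (Matrix.of fun _ _ : Fin 1 => a) (Matrix.of fun _ _ : Fin 1 => b)) := by
    show _ * _ = _
    rw [dsum_one_one]
    rw [Matrix.mul_fin_two]
    simp [ha, hb, hab, hba]
  rw [clsE_of_idem a ha, clsE_of_idem b hb, clsE_of_idem (a + b) habs]
  rw [cls_add ⟨1, _, idem_one_of a ha⟩ ⟨1, _, idem_one_of b hb⟩ ⟨1 + 1, _, hD⟩ rfl HEq.rfl]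
  refine (cls_eq_of_MvN _ _ ⟨2, by norm_num, by norm_num,
    !![a, 0; b, 0], !![a, b; 0, 0], ?_, ?_⟩).symm
  · have : pad 2 (dsum (Matrix.of fun _ _ : Fin 1 => a)
        (Matrix.of fun _ _ : Fin 1 => b)) = !![a, 0; 0, b] := by
      rw [dsum_one_one]
      exact pad_self _
    rw [this, Matrix.mul_fin_two]
    simp [ha, hb, hab, hba]
  · have : pad 2 (Matrix.of fun _ _ : Fin 1 => (a + b)) = !![a + b, 0; 0, 0] := by
      ext i j
      fin_cases i <;> fin_cases j <;> simp [pad]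
    rw [this, Matrix.mul_fin_two]
    simp [ha, hb]

lemma clsE_sum {ι : Type*} (s : Finset ι) (u : ι → R)
    (hidem : ∀ i ∈ s, u i * u i = u i)
    (horth : ∀ i ∈ s, ∀ j ∈ s, i ≠ j → u i * u j = 0) :
    (∑ i ∈ s, u i) * (∑ i ∈ s, u i) = ∑ i ∈ s, u i ∧
      clsE (∑ i ∈ s, u i) = ∑ i ∈ s, clsE (u i) := by
  classical
  induction s using Finset.induction with
  | empty => simp [clsE_zero]
  | @insert a s ha ih =>
    have hidem' : ∀ i ∈ s, u i * u i = u i := fun i hi =>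
      hidem i (Finset.mem_insert_of_mem hi)
    have horth' : ∀ i ∈ s, ∀ j ∈ s, i ≠ j → u i * u j = 0 := fun i hi j hj =>
      horth i (Finset.mem_insert_of_mem hi) j (Finset.mem_insert_of_mem hj)
    obtain ⟨hW, hcW⟩ := ih hidem' horth'
    have ha' : a ∈ insert a s := Finset.mem_insert_self a s
    have haW : u a * (∑ i ∈ s, u i) = 0 := by
      rw [Finset.mul_sum]
      exact Finset.sum_eq_zero fun i hi =>
        horth a ha' i (Finset.mem_insert_of_mem hi) (fun h => ha (h ▸ hi))
    have hWa : (∑ i ∈ s, u i) * u a = 0 := by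
      rw [Finset.sum_mul]
      exact Finset.sum_eq_zero fun i hi =>
        horth i (Finset.mem_insert_of_mem hi) a ha' (fun h => ha (h ▸ hi))
    rw [Finset.sum_insert ha, Finset.sum_insert ha]
    constructor
    · rw [add_mul, mul_add, mul_add, hidem a ha', hW, haW, hWa, add_zero, zero_add]
    · rw [clsE_add_orth _ _ (hidem a ha') hW haW hWa, hcW]

end AuxV

/-- Let `E` be a directed graph, `K` a field, `v` an infinite emitter of
`E`, and `S ⊆ T` finite non-empty subsets of `s⁻¹(v)`.  Then in `V[L_K(E)]`:
`[p_v − Σ_{e∈S} t_e t_e^*] = [p_v − Σ_{e∈T} t_e t_e^*] + Σ_{e ∈ T\S} [p_{r(e)}]`. -/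
theorem class_of_corner_refinement (K : Type) [Field K] (G : DGraph)
    (A : Type) [NonUnitalRing A] [Module K A] (L : LeavittFamily G A)
    (v : G.V) (hv : G.InfEmitter v) (S T : Finset G.E)
    (hSne : S.Nonempty) (hTne : T.Nonempty) (hST : S ⊆ T)
    (hTv : ∀ e ∈ T, G.s e = v) :
    clsE (L.p v - ∑ e ∈ S, L.t e * L.t' e)
      = clsE (L.p v - ∑ e ∈ T, L.t e * L.t' e)
        + ∑ e ∈ T \ S, clsE (L.p (G.r e)) := by
  classical
  set u : G.E → A := fun e => L.t e * L.t' e with hu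
  have hu_idem : ∀ e, u e * u e = u e := fun e => by
    simp only [hu]
    rw [mul_assoc, ← mul_assoc (L.t' e), L.t'_t, L.r_t']
  have hu_orth : ∀ e f, e ≠ f → u e * u f = 0 := fun e f hef => by
    simp only [hu]
    rw [mul_assoc, ← mul_assoc (L.t' e), L.t'_t_orth e f hef, zero_mul, mul_zero]
  have hpv_u : ∀ e ∈ T, L.p v * u e = u e := fun e he => by
    simp only [hu]
    rw [← hTv e he, ← mul_assoc, L.s_t]
  have hu_pv : ∀ e ∈ T, u e * L.p v = u e := fun e he => by
    simp only [hu]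
    rw [← hTv e he, mul_assoc, L.t'_s]
  set PT : A := ∑ e ∈ T, u e with hPT
  obtain ⟨hPP, -⟩ := clsE_sum T u (fun i _ => hu_idem i)
    (fun i _ j _ hij => hu_orth i j hij)
  have hpvPT : L.p v * PT = PT := by
    rw [hPT, Finset.mul_sum]
    exact Finset.sum_congr rfl fun e he => hpv_u e he
  have hPTpv : PT * L.p v = PT := by
    rw [hPT, Finset.sum_mul]
    exact Finset.sum_congr rfl fun e he => hu_pv e he
  set q : A := L.p v - PT with hq
  have hqq : q * q = q := by
    rw [hq, sub_mul, mul_sub, mul_sub, L.p_idem, hpvPT, hPTpv, hPP, sub_self, sub_zero]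
  have hPTu : ∀ e ∈ T, PT * u e = u e := fun e he => by
    rw [hPT, Finset.sum_mul]
    rw [Finset.sum_eq_single_of_mem e he (fun f hf hfe => hu_orth f e hfe)]
    exact hu_idem e
  have huPT : ∀ e ∈ T, u e * PT = u e := fun e he => by
    rw [hPT, Finset.mul_sum]
    rw [Finset.sum_eq_single_of_mem e he (fun f hf hfe => hu_orth e f (Ne.symm hfe))]
    exact hu_idem e
  have hqu : ∀ e ∈ T, q * u e = 0 := fun e he => by
    rw [hq, sub_mul, hpv_u e he, hPTu e he, sub_self]
  have huq : ∀ e ∈ T, u e * q = 0 := fun e he => by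
    rw [hq, mul_sub, hu_pv e he, huPT e he, sub_self]
  set W : A := ∑ e ∈ T \ S, u e with hW
  obtain ⟨hWW, hcW⟩ := clsE_sum (T \ S) u
    (fun i _ => hu_idem i) (fun i _ j _ hij => hu_orth i j hij)
  have hqW : q * W = 0 := by
    rw [hW, Finset.mul_sum]
    exact Finset.sum_eq_zero fun e he => hqu e (Finset.mem_sdiff.mp he).1
  have hWq : W * q = 0 := by
    rw [hW, Finset.sum_mul]
    exact Finset.sum_eq_zero fun e he => huq e (Finset.mem_sdiff.mp he).1
  have hsplit : L.p v - ∑ e ∈ S, L.t e * L.t' e = q + W := by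
    rw [hq, hW, hPT, ← Finset.sum_sdiff hST]
    abel
  rw [hsplit, clsE_add_orth q W hqq hWW hqW hWq, hcW]
  congr 1
  exact Finset.sum_congr rfl fun e he =>
    clsE_eq_of_conj (u e) (L.p (G.r e)) (L.t e) (L.t' e)
      (hu_idem e) (L.p_idem (G.r e)) rfl (L.t'_t e).symm
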